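/- arXiv:2106.13704 — 5 statements merged into one kernel-verified Lean document; each statement's English description precedes it below -/
import Mathlib

section
/- Let M be a set with at least two elements and L a family of subsets of M such that any two distinct points of M lie in exactly one member of L. Let * be a binary operation on M with x*x = x for all x, such that every block B in L is closed under * (x,y in B implies x*y in B), and such that for every block B in L the restriction of * to B is a quasigroup (for all a,b in B there is a unique x in B with a*x = b and a unique y in B with y*a = b). Then (M,*) is a quasigroup: for all a,b in M there is a unique x in M with a*x = b and a unique y in M with y*a = b. -/
/-- If `M` (with at least two elements) carries a family `L` of
blocks such that any two distinct points lie in exactly one block, and an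
idempotent binary operation `*` under which every block is closed and whose
restriction to each block is a quasigroup, then `(M,*)` is a quasigroup. -/
theorem blockwise_quasigroup_is_quasigroup
    {M : Type*} (htwo : ∃ a b : M, a ≠ b)
    (L : Set (Set M))
    (hL : ∀ u v : M, u ≠ v → ∃! B : Set M, B ∈ L ∧ u ∈ B ∧ v ∈ B)
    (mul : M → M → M)
    (hidem : ∀ x : M, mul x x = x)
    (hclosed : ∀ B ∈ L, ∀ x ∈ B, ∀ y ∈ B, mul x y ∈ B)
    (hblock : ∀ B ∈ L, ∀ a ∈ B, ∀ b ∈ B,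
      (∃! x : M, x ∈ B ∧ mul a x = b) ∧ (∃! y : M, y ∈ B ∧ mul y a = b)) :
    ∀ a b : M, (∃! x : M, mul a x = b) ∧ (∃! y : M, mul y a = b) := by
  intro a b
  constructor
  · by_cases hab : a = b
    · subst hab
      refine ⟨a, hidem a, ?_⟩
      intro x hx
      by_contra hxa
      obtain ⟨B, ⟨hB, haB, hxB⟩, -⟩ := hL a x (fun h => hxa h.symm)
      obtain ⟨⟨x0, hx0, hx0u⟩, -⟩ := hblock B hB a haB a haB
      have h1 := hx0u x ⟨hxB, hx⟩
      have h2 := hx0u a ⟨haB, hidem a⟩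
      exact hxa (h1.trans h2.symm)
    · obtain ⟨B, ⟨hB, haB, hbB⟩, hBu⟩ := hL a b hab
      obtain ⟨⟨x0, ⟨hx0B, hx0⟩, hx0u⟩, -⟩ := hblock B hB a haB b hbB
      refine ⟨x0, hx0, ?_⟩
      intro x hx
      have hxa : x ≠ a := by
        intro h
        rw [h] at hx
        exact hab ((hidem a).symm.trans hx)
      obtain ⟨B', ⟨hB', haB', hxB'⟩, -⟩ := hL a x (fun h => hxa h.symm)
      have hbB' : b ∈ B' := hx ▸ hclosed B' hB' a haB' x hxB'
      have hBB : B' = B := hBu B' ⟨hB', haB', hbB'⟩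
      exact hx0u x ⟨hBB ▸ hxB', hx⟩
  · by_cases hab : a = b
    · subst hab
      refine ⟨a, hidem a, ?_⟩
      intro y hy
      by_contra hya
      obtain ⟨B, ⟨hB, haB, hyB⟩, -⟩ := hL a y (fun h => hya h.symm)
      obtain ⟨-, ⟨y0, hy0, hy0u⟩⟩ := hblock B hB a haB a haB
      have h1 := hy0u y ⟨hyB, hy⟩
      have h2 := hy0u a ⟨haB, hidem a⟩
      exact hya (h1.trans h2.symm)
    · obtain ⟨B, ⟨hB, haB, hbB⟩, hBu⟩ := hL a b hab
      obtain ⟨-, ⟨y0, ⟨hy0B, hy0⟩, hy0u⟩⟩ := hblock B hB a haB b hbB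
      refine ⟨y0, hy0, ?_⟩
      intro y hy
      have hya : y ≠ a := by
        intro h
        rw [h] at hy
        exact hab ((hidem a).symm.trans hy)
      obtain ⟨B', ⟨hB', haB', hyB'⟩, -⟩ := hL a y (fun h => hya h.symm)
      have hbB' : b ∈ B' := hy ▸ hclosed B' hB' y hyB' a haB'
      have hBB : B' = B := hBu B' ⟨hB', haB', hbB'⟩
      exact hy0u y ⟨hBB ▸ hyB', hy⟩
end

section
/- Let (M,L) be a Steiner 4-system: L is a family of 4-element subsets of M such that any two distinct points lie in exactly one member of L, and assume M has at least two elements. Suppose * is a binary operation on M with x*x = x for all x, every block B in L is closed under *, and for each block B the restriction of * to B satisfies the Stein identities and is a quasigroup on B. Then (M,*) is a Stein quasigroup: it is a quasigroup on M and satisfies x*x = x, (x*y)*y = y*x, and (y*x)*y = x for all x,y in M. -/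
/-- If `(M,L)` is a Steiner 4-system (blocks of size 4, two
distinct points in exactly one block, `M` with at least two elements) and `*`
is an idempotent operation under which every block is closed, whose restriction
to each block satisfies the Stein identities and is a quasigroup on the block,
then `(M,*)` is a Stein quasigroup: a quasigroup satisfying `x*x = x`,
`(x*y)*y = y*x` and `(y*x)*y = x` globally. -/
theorem blockwise_stein_is_stein_quasigroup
    {M : Type*} (htwo : ∃ a b : M, a ≠ b)
    (L : Set (Set M))
    (hcard : ∀ B ∈ L, B.ncard = 4)
    (hL : ∀ u v : M, u ≠ v → ∃! B : Set M, B ∈ L ∧ u ∈ B ∧ v ∈ B)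
    (mul : M → M → M)
    (hidem : ∀ x : M, mul x x = x)
    (hclosed : ∀ B ∈ L, ∀ x ∈ B, ∀ y ∈ B, mul x y ∈ B)
    (hstein : ∀ B ∈ L, ∀ x ∈ B, ∀ y ∈ B,
      mul (mul x y) y = mul y x ∧ mul (mul y x) y = x)
    (hquasi : ∀ B ∈ L, ∀ a ∈ B, ∀ b ∈ B,
      (∃! x : M, x ∈ B ∧ mul a x = b) ∧ (∃! y : M, y ∈ B ∧ mul y a = b)) :
    (∀ a b : M, (∃! x : M, mul a x = b) ∧ (∃! y : M, mul y a = b)) ∧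
    (∀ x : M, mul x x = x) ∧
    (∀ x y : M, mul (mul x y) y = mul y x) ∧
    (∀ x y : M, mul (mul y x) y = x) := by
  refine ⟨?_, hidem, ?_, ?_⟩
  · intro a b
    by_cases hab : a = b
    · subst hab
      constructor
      · refine ⟨a, hidem a, ?_⟩
        intro x hx
        by_cases hxa : x = a
        · exact hxa
        · obtain ⟨B, ⟨hB, haB, hxB⟩, _⟩ := hL a x (Ne.symm hxa)
          obtain ⟨⟨z, hz, huz⟩, _⟩ := hquasi B hB a haB a haB
          exact (huz x ⟨hxB, hx⟩).trans (huz a ⟨haB, hidem a⟩).symm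
      · refine ⟨a, hidem a, ?_⟩
        intro y hy
        by_cases hya : y = a
        · exact hya
        · obtain ⟨B, ⟨hB, hyB, haB⟩, _⟩ := hL y a hya
          obtain ⟨_, ⟨z, hz, huz⟩⟩ := hquasi B hB a haB a haB
          exact (huz y ⟨hyB, hy⟩).trans (huz a ⟨haB, hidem a⟩).symm
    · obtain ⟨B, ⟨hB, haB, hbB⟩, huB⟩ := hL a b hab
      obtain ⟨⟨x, ⟨hxB, hx⟩, hux⟩, ⟨y, ⟨hyB, hy⟩, huy⟩⟩ := hquasi B hB a haB b hbB
      constructor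
      · refine ⟨x, hx, ?_⟩
        intro x' hx'
        have hx'a : x' ≠ a := by
          intro h; exact hab (by rw [← hx', h, hidem])
        obtain ⟨B', ⟨hB', haB', hx'B'⟩, _⟩ := hL a x' (Ne.symm hx'a)
        have hbB' : b ∈ B' := hx' ▸ hclosed B' hB' a haB' x' hx'B'
        have : B' = B := huB B' ⟨hB', haB', hbB'⟩
        exact hux x' ⟨this ▸ hx'B', hx'⟩
      · refine ⟨y, hy, ?_⟩
        intro y' hy'
        have hy'a : y' ≠ a := by
          intro h; exact hab (by rw [← hy', h, hidem])
        obtain ⟨B', ⟨hB', hy'B', haB'⟩, _⟩ := hL y' a hy'a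
        have hbB' : b ∈ B' := hy' ▸ hclosed B' hB' y' hy'B' a haB'
        have : B' = B := huB B' ⟨hB', haB', hbB'⟩
        exact huy y' ⟨this ▸ hy'B', hy'⟩
  · intro x y
    by_cases hxy : x = y
    · subst hxy; rw [hidem, hidem]
    · obtain ⟨B, ⟨hB, hxB, hyB⟩, _⟩ := hL x y hxy
      exact (hstein B hB x hxB y hyB).1
  · intro x y
    by_cases hxy : x = y
    · subst hxy; rw [hidem, hidem]
    · obtain ⟨B, ⟨hB, hxB, hyB⟩, _⟩ := hL x y hxy
      exact (hstein B hB x hxB y hyB).2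
end

section
/- Let (Q,*) be a finite Stein quasigroup. Then for any two distinct elements x,y of Q, the subgroupoid generated by {x,y} (the smallest subset containing x and y closed under *) has exactly 4 elements, namely {x, y, x*y, y*x}; consequently any two distinct elements of Q lie in exactly one 2-generated subgroupoid, and the family of subgroupoids generated by pairs of distinct elements is a Steiner 4-system on Q. -/
/-- The subgroupoid of `(Q, mul)` generated by `{p, q}`: the smallest subset
containing `p` and `q` and closed under `mul`. -/
def genSubgroupoid {Q : Type*} (mul : Q → Q → Q) (p q : Q) : Set Q :=
  ⋂₀ {S : Set Q | p ∈ S ∧ q ∈ S ∧ ∀ a ∈ S, ∀ b ∈ S, mul a b ∈ S}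

/-- In a finite Stein quasigroup, the subgroupoid generated by two
distinct elements `x, y` is `{x, y, x*y, y*x}` and has exactly 4 elements;
consequently any two distinct elements lie in exactly one 2-generated
subgroupoid, so these subgroupoids form a Steiner 4-system on `Q`. -/
theorem stein_quasigroup_two_generated
    {Q : Type*} [Finite Q] (mul : Q → Q → Q)
    (hquasi : ∀ a b : Q, (∃! x : Q, mul a x = b) ∧ (∃! y : Q, mul y a = b))
    (hidem : ∀ x : Q, mul x x = x)
    (hstein1 : ∀ x y : Q, mul (mul x y) y = mul y x)
    (hstein2 : ∀ x y : Q, mul (mul y x) y = x) :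
    (∀ x y : Q, x ≠ y →
      genSubgroupoid mul x y = ({x, y, mul x y, mul y x} : Set Q) ∧
      ({x, y, mul x y, mul y x} : Set Q).ncard = 4) ∧
    (∀ u v : Q, u ≠ v →
      ∃! s : Set Q, (∃ p q : Q, p ≠ q ∧ s = genSubgroupoid mul p q) ∧
        u ∈ s ∧ v ∈ s) := by
  -- cancellation laws
  have lcancel : ∀ a x y : Q, mul a x = mul a y → x = y := fun a x y h =>
    (hquasi a (mul a y)).1.unique h rfl
  have rcancel : ∀ a x y : Q, mul x a = mul y a → x = y := fun a x y h =>
    (hquasi a (mul y a)).2.unique h rfl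
  -- derived identities
  have t1 : ∀ x y : Q, mul x (mul x y) = mul y x := fun x y =>
    rcancel x _ _ (by rw [hstein2, hstein1])
  have t2 : ∀ x y : Q, mul x (mul y x) = y := fun x y =>
    rcancel x _ _ (by rw [hstein2])
  have t3 : ∀ x y : Q, mul (mul x y) (mul y x) = x := fun x y =>
    rcancel (mul x y) _ _ (by rw [hstein2, t1])
  -- closure of the 4-element set
  have closed : ∀ x y : Q, ∀ a ∈ ({x, y, mul x y, mul y x} : Set Q),
      ∀ b ∈ ({x, y, mul x y, mul y x} : Set Q),
      mul a b ∈ ({x, y, mul x y, mul y x} : Set Q) := by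
    intro x y a ha b hb
    simp only [Set.mem_insert_iff, Set.mem_singleton_iff] at ha hb ⊢
    rcases ha with rfl | rfl | rfl | rfl <;> rcases hb with rfl | rfl | rfl | rfl <;>
      simp [hidem, hstein1, hstein2, t1, t2, t3]
  -- the generated subgroupoid is exactly the 4-element set
  have gen_eq : ∀ x y : Q,
      genSubgroupoid mul x y = ({x, y, mul x y, mul y x} : Set Q) := by
    intro x y
    apply Set.Subset.antisymm
    · exact Set.sInter_subset_of_mem ⟨by simp, by simp, closed x y⟩
    · intro a ha
      intro S hS
      obtain ⟨hx, hy, hc⟩ := hS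
      rcases ha with rfl | rfl | rfl | rfl
      exacts [hx, hy, hc _ hx _ hy, hc _ hy _ hx]
  -- distinctness
  have distinct : ∀ x y : Q, x ≠ y →
      x ≠ mul x y ∧ y ≠ mul x y ∧ x ≠ mul y x ∧ y ≠ mul y x ∧ mul x y ≠ mul y x := by
    intro x y hxy
    have h1 : x ≠ mul x y := fun h => hxy (lcancel x x y (by rw [hidem]; exact h))
    have h2 : y ≠ mul x y := fun h => hxy (rcancel y x y (by rw [← h, hidem]))
    have h3 : x ≠ mul y x := fun h => hxy (rcancel x x y (by rw [hidem]; exact h))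
    have h4 : y ≠ mul y x := fun h => hxy (lcancel y x y (by rw [← h, hidem]))
    have h5 : mul x y ≠ mul y x := by
      intro h
      apply h2
      exact lcancel (mul x y) y (mul x y) (by rw [hstein1, hidem, ← h])
    exact ⟨h1, h2, h3, h4, h5⟩
  have hcard : ∀ x y : Q, x ≠ y → ({x, y, mul x y, mul y x} : Set Q).ncard = 4 := by
    intro x y hxy
    obtain ⟨h1, h2, h3, h4, h5⟩ := distinct x y hxy
    rw [Set.ncard_insert_of_notMem (by
          simp only [Set.mem_insert_iff, Set.mem_singleton_iff]; push_neg
          exact ⟨hxy, h1, h3⟩),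
        Set.ncard_insert_of_notMem (by
          simp only [Set.mem_insert_iff, Set.mem_singleton_iff]; push_neg
          exact ⟨h2, h4⟩),
        Set.ncard_insert_of_notMem (by simpa using h5),
        Set.ncard_singleton]
  refine ⟨fun x y hxy => ⟨gen_eq x y, hcard x y hxy⟩, ?_⟩
  intro u v huv
  have humem : u ∈ genSubgroupoid mul u v := by rw [gen_eq]; simp
  have hvmem : v ∈ genSubgroupoid mul u v := by
    rw [gen_eq]; simp
  refine ⟨genSubgroupoid mul u v, ⟨⟨u, v, huv, rfl⟩, humem, hvmem⟩, ?_⟩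
  rintro s ⟨⟨p, q, hpq, rfl⟩, hu, hv⟩
  have hclosedpq : ∀ a ∈ genSubgroupoid mul p q, ∀ b ∈ genSubgroupoid mul p q,
      mul a b ∈ genSubgroupoid mul p q := by
    rw [gen_eq]; exact closed p q
  have hsub : genSubgroupoid mul u v ⊆ genSubgroupoid mul p q :=
    Set.sInter_subset_of_mem ⟨hu, hv, hclosedpq⟩
  have hc1 : (genSubgroupoid mul p q).ncard = 4 := by rw [gen_eq]; exact hcard p q hpq
  have hc2 : (genSubgroupoid mul u v).ncard = 4 := by rw [gen_eq]; exact hcard u v huv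
  exact (Set.eq_of_subset_of_ncard_le hsub (by rw [hc1, hc2]) (Set.toFinite _)).symm
end

section
/- Let F be a finite field with at least 3 elements and let a be a generator of the multiplicative group of F (so in particular a ≠ 0 and a ≠ 1). Define x*y = y + (x−y)·a on F. Then for any two distinct elements u,v of F, the smallest subset of F containing u and v and closed under * is F itself; that is, every 2-generated subalgebra of the block algebra (F,*) is all of F. -/
/-- Let `F` be a finite field with at least 3 elements and `a` a
generator of its multiplicative group. For the block algebra operation
`x*y = y + (x−y)·a`, the smallest subset of `F` containing two distinct
elements `u, v` and closed under `*` is all of `F`: every 2-generated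
subalgebra is everything. -/
theorem block_algebra_two_generated_is_all
    {F : Type*} [Field F] [Fintype F] (hcard : 3 ≤ Fintype.card F)
    (a : F) (hgen : ∀ z : F, z ≠ 0 → ∃ n : ℕ, a ^ n = z) :
    ∀ u v : F, u ≠ v →
      ⋂₀ {S : Set F | u ∈ S ∧ v ∈ S ∧ ∀ x ∈ S, ∀ y ∈ S, y + (x - y) * a ∈ S}
        = Set.univ := by
  intro u v huv
  apply Set.eq_univ_of_forall
  intro z
  rw [Set.mem_sInter]
  rintro S ⟨hu, hv, hcl⟩
  have key : ∀ n : ℕ, v + (u - v) * a ^ n ∈ S := by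
    intro n
    induction n with
    | zero => simpa using hu
    | succ n ih =>
      have h := hcl _ ih _ hv
      have he : v + (v + (u - v) * a ^ n - v) * a = v + (u - v) * a ^ (n + 1) := by
        ring
      rwa [he] at h
  by_cases hz : z = v
  · rwa [hz]
  · have hne : (z - v) / (u - v) ≠ 0 :=
      div_ne_zero (sub_ne_zero.mpr hz) (sub_ne_zero.mpr huv)
    obtain ⟨n, hn⟩ := hgen _ hne
    have h := key n
    rw [hn] at h
    have he : v + (u - v) * ((z - v) / (u - v)) = z := by
      rw [mul_comm, div_mul_cancel₀ _ (sub_ne_zero.mpr huv)]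
      ring
    rwa [he] at h
end

section
/- Let X be a finite set with at least 2 elements and let G be a group of permutations of X acting sharply 2-transitively: for all a,b,c,d in X with a ≠ b and c ≠ d there is exactly one g in G with g(a) = c and g(b) = d. Then the cardinality of X is a prime power. -/
set_option linter.unusedSectionVars false

namespace Burnside15

variable {X : Type*} [Fintype X]

def Sharp (G : Subgroup (Equiv.Perm X)) : Prop :=
  ∀ a b c d : X, a ≠ b → c ≠ d →
    ∃! g : G, (g : Equiv.Perm X) a = c ∧ (g : Equiv.Perm X) b = d

variable {G : Subgroup (Equiv.Perm X)}

theorem fix_eq (hs : Sharp G) {g : G} (hg : g ≠ 1) {x y : X}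
    (hx : (g : Equiv.Perm X) x = x) (hy : (g : Equiv.Perm X) y = y) : x = y := by
  by_contra hxy
  obtain ⟨u, -, hu⟩ := hs x y x y hxy hxy
  have h1 : g = u := hu g ⟨hx, hy⟩
  have h2 : (1 : G) = u := hu 1 ⟨by simp, by simp⟩
  exact hg (h1.trans h2.symm)

theorem cardG (hcard : 2 ≤ Fintype.card X) (hs : Sharp G) :
    Nat.card G = Fintype.card X * (Fintype.card X - 1) := by
  classical
  obtain ⟨a, b, hab⟩ := Fintype.exists_pair_of_one_lt_card (α := X) (by omega)
  have hf : Function.Bijective (fun g : G =>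
      (⟨((g : Equiv.Perm X) a, (g : Equiv.Perm X) b), by
        simp only [ne_eq, EmbeddingLike.apply_eq_iff_eq]; exact hab⟩ :
        {p : X × X // p.1 ≠ p.2})) := by
    constructor
    · intro g h hgh
      simp only [Subtype.mk.injEq, Prod.mk.injEq] at hgh
      obtain ⟨u, -, hu⟩ := hs a b ((g : Equiv.Perm X) a) ((g : Equiv.Perm X) b) hab
        (by simp only [ne_eq, EmbeddingLike.apply_eq_iff_eq]; exact hab)
      exact (hu g ⟨rfl, rfl⟩).trans (hu h ⟨hgh.1.symm, hgh.2.symm⟩).symm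
    · rintro ⟨⟨c, d⟩, hcd⟩
      obtain ⟨g, ⟨hg1, hg2⟩, -⟩ := hs a b c d hab hcd
      exact ⟨g, by simp [hg1, hg2]⟩
  rw [Nat.card_eq_of_bijective _ hf, Nat.card_eq_fintype_card]
  have h1 : Fintype.card {p : X × X // p.1 = p.2} = Fintype.card X := by
    refine (Fintype.card_of_bijective (f := fun x : X => (⟨(x, x), rfl⟩ : {p : X × X // p.1 = p.2})) ?_).symm
    constructor
    · intro x y hxy; simpa using hxy
    · rintro ⟨⟨c, d⟩, (h : c = d)⟩; exact ⟨c, by simp [h]⟩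
  have h2 := Fintype.card_subtype_compl (fun p : X × X => p.1 = p.2)
  have h3 : Fintype.card {p : X × X // ¬ p.1 = p.2} = Fintype.card {p : X × X // p.1 ≠ p.2} :=
    Fintype.card_congr (Equiv.refl _)
  rw [h3] at h2
  rw [h2, h1, Fintype.card_prod]
  obtain ⟨k, hk⟩ : ∃ k, Fintype.card X = k + 1 := ⟨Fintype.card X - 1, by omega⟩
  rw [hk]
  simp only [Nat.add_sub_cancel]
  have : (k + 1) * (k + 1) = (k + 1) * k + (k + 1) := by ring
  rw [this, Nat.add_sub_cancel]

theorem card_stab (hcard : 2 ≤ Fintype.card X) (hs : Sharp G) (c : X) :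
    Nat.card {g : G // (g : Equiv.Perm X) c = c} = Fintype.card X - 1 := by
  classical
  obtain ⟨b, hb⟩ := Fintype.exists_ne_of_one_lt_card (by omega) c
  have hf : Function.Bijective (fun g : {g : G // (g : Equiv.Perm X) c = c} =>
      (⟨(g.1 : Equiv.Perm X) b, by
        intro h
        exact hb (((g.1 : Equiv.Perm X)).injective (h.trans g.2.symm))⟩ :
        {d : X // d ≠ c})) := by
    constructor
    · rintro ⟨g, hg⟩ ⟨h, hh⟩ hgh
      simp only [Subtype.mk.injEq] at hgh ⊢
      obtain ⟨u, -, hu⟩ := hs c b c ((g : Equiv.Perm X) b) (Ne.symm hb)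
        (by intro h2; exact hb (((g : Equiv.Perm X)).injective (h2.symm.trans hg.symm)))
      exact (hu g ⟨hg, rfl⟩).trans (hu h ⟨hh, hgh.symm⟩).symm
    · rintro ⟨d, hd⟩
      obtain ⟨g, ⟨hg1, hg2⟩, -⟩ := hs c b c d (Ne.symm hb) (Ne.symm hd)
      exact ⟨⟨g, hg1⟩, by simp [hg2]⟩
  rw [Nat.card_eq_of_bijective _ hf, Nat.card_eq_fintype_card,
    Fintype.card_subtype_compl, Fintype.card_subtype_eq]

theorem card_fpf (hcard : 2 ≤ Fintype.card X) (hs : Sharp G) :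
    Nat.card {g : G // ∀ x, (g : Equiv.Perm X) x ≠ x} = Fintype.card X - 1 := by
  classical
  have hne : Nonempty X := Fintype.card_pos_iff.mp (by omega)
  -- count of elements with a fixed point which are nontrivial
  have hmid : Nat.card {g : G // g ≠ 1 ∧ ∃ x, (g : Equiv.Perm X) x = x}
      = Fintype.card X * (Fintype.card X - 2) := by
    have hf : Function.Bijective
        (fun sp : Σ c : X, {g : G // g ≠ 1 ∧ (g : Equiv.Perm X) c = c} =>
          (⟨sp.2.1, sp.2.2.1, ⟨sp.1, sp.2.2.2⟩⟩ :
            {g : G // g ≠ 1 ∧ ∃ x, (g : Equiv.Perm X) x = x})) := by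
      constructor
      · rintro ⟨c, g, hg1, hgc⟩ ⟨d, h, hh1, hhd⟩ hgh
        simp only [Subtype.mk.injEq] at hgh
        subst hgh
        have : c = d := fix_eq hs hg1 hgc hhd
        subst this
        rfl
      · rintro ⟨g, hg1, x, hx⟩
        exact ⟨⟨x, g, hg1, hx⟩, rfl⟩
    rw [← Nat.card_eq_of_bijective _ hf, Nat.card_eq_fintype_card,
      Fintype.card_sigma]
    have hc : ∀ c : X,
        Fintype.card {g : G // g ≠ 1 ∧ (g : Equiv.Perm X) c = c}
          = Fintype.card X - 2 := by
      intro c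
      have hdisj : Disjoint (fun g : G => g ≠ 1 ∧ (g : Equiv.Perm X) c = c)
          (fun g : G => g = 1) := by
        rintro p hp hq g hg
        exact absurd ((hq g hg)) (hp g hg).1
      have h1 := Fintype.card_subtype_or_disjoint _ _ hdisj
      have h2 : Fintype.card {g : G // (g ≠ 1 ∧ (g : Equiv.Perm X) c = c) ∨ g = 1}
          = Fintype.card {g : G // (g : Equiv.Perm X) c = c} := by
        refine Fintype.card_congr (Equiv.subtypeEquivRight fun g => ?_)
        constructor
        · rintro (⟨-, h⟩ | rfl)
          · exact h
          · simp
        · intro h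
          by_cases hg : g = 1
          · exact Or.inr hg
          · exact Or.inl ⟨hg, h⟩
      have h3 : Fintype.card {g : G // g = 1} = 1 := Fintype.card_subtype_eq 1
      have h4 : Fintype.card {g : G // (g : Equiv.Perm X) c = c}
          = Fintype.card X - 1 := by
        rw [← Nat.card_eq_fintype_card]; exact card_stab hcard hs c
      omega
    simp only [hc, Finset.sum_const, Finset.card_univ, smul_eq_mul]
  -- split the whole group
  have htot : Nat.card G
      = Nat.card {g : G // ∃ x, (g : Equiv.Perm X) x = x}
        + Nat.card {g : G // ∀ x, (g : Equiv.Perm X) x ≠ x} := by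
    have hdisj : Disjoint (fun g : G => ∃ x, (g : Equiv.Perm X) x = x)
        (fun g : G => ∀ x, (g : Equiv.Perm X) x ≠ x) := by
      rintro p hp hq g hg
      obtain ⟨x, hx⟩ := hp g hg
      exact absurd hx (hq g hg x)
    have h1 := Fintype.card_subtype_or_disjoint _ _ hdisj
    have h2 : Fintype.card {g : G // (∃ x, (g : Equiv.Perm X) x = x)
        ∨ ∀ x, (g : Equiv.Perm X) x ≠ x} = Fintype.card G := by
      refine Fintype.card_congr (Equiv.subtypeUnivEquiv fun g => ?_)
      by_cases h : ∃ x, (g : Equiv.Perm X) x = x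
      · exact Or.inl h
      · push_neg at h
        exact Or.inr h
    simp only [Nat.card_eq_fintype_card]
    omega
  -- split the fixed-point part
  have hfixpart : Nat.card {g : G // ∃ x, (g : Equiv.Perm X) x = x}
      = 1 + Fintype.card X * (Fintype.card X - 2) := by
    have hdisj : Disjoint (fun g : G => g = 1)
        (fun g : G => g ≠ 1 ∧ ∃ x, (g : Equiv.Perm X) x = x) := by
      rintro p hp hq g hg
      exact absurd (hp g hg) (hq g hg).1
    have h1 := Fintype.card_subtype_or_disjoint _ _ hdisj
    have h2 : Fintype.card {g : G // g = 1
        ∨ (g ≠ 1 ∧ ∃ x, (g : Equiv.Perm X) x = x)}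
        = Fintype.card {g : G // ∃ x, (g : Equiv.Perm X) x = x} := by
      refine Fintype.card_congr (Equiv.subtypeEquivRight fun g => ?_)
      constructor
      · rintro (rfl | ⟨-, h⟩)
        · exact ⟨Classical.arbitrary X, by simp⟩
        · exact h
      · intro h
        by_cases hg : g = 1
        · exact Or.inl hg
        · exact Or.inr ⟨hg, h⟩
    have h3 : Fintype.card {g : G // g = 1} = 1 := Fintype.card_subtype_eq 1
    simp only [Nat.card_eq_fintype_card] at hmid ⊢
    omega
  rw [cardG hcard hs, hfixpart] at htot
  obtain ⟨k, hk⟩ : ∃ k, Fintype.card X = k + 2 := ⟨Fintype.card X - 2, by omega⟩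
  rw [hk] at htot ⊢
  have hs1 : k + 2 - 1 = k + 1 := by omega
  have hs2 : k + 2 - 2 = k := by omega
  rw [hs1, hs2] at htot
  rw [hs1]
  have he1 : (k + 2) * (k + 1) = 1 + (k + 2) * k + (k + 1) := by ring
  rw [he1] at htot
  linarith [htot]

theorem stab_smul_card (hcard : 2 ≤ Fintype.card X) (hs : Sharp G) (c : X) :
    Nat.card (MulAction.stabilizer G c) = Fintype.card X - 1 := by
  rw [← card_stab hcard hs c]
  refine Nat.card_congr (Equiv.subtypeEquivRight fun g => ?_)
  simp [MulAction.mem_stabilizer_iff, Subgroup.smul_def, Equiv.Perm.smul_def]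

theorem exists_fpf (hcard : 2 ≤ Fintype.card X) (hs : Sharp G) {x y : X}
    (hxy : x ≠ y) : ∃ g : G, (∀ z, (g : Equiv.Perm X) z ≠ z) ∧ (g : Equiv.Perm X) x = y := by
  classical
  obtain ⟨t, ⟨htx, hty⟩, -⟩ := hs x y y x hxy (Ne.symm hxy)
  have ht1 : t ≠ 1 := by
    rintro rfl
    exact hxy (by simpa using htx)
  have ht2 : t * t = 1 := by
    by_contra h
    refine hxy (fix_eq hs h ?_ ?_)
    · show (↑(t * t) : Equiv.Perm X) x = x
      simp [Subgroup.coe_mul, Equiv.Perm.mul_apply, htx, hty]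
    · show (↑(t * t) : Equiv.Perm X) y = y
      simp [Subgroup.coe_mul, Equiv.Perm.mul_apply, htx, hty]
  have tinv : ∀ z, (t : Equiv.Perm X) ((t : Equiv.Perm X) z) = z := by
    intro z
    have h := congrArg (fun p : G => (p : Equiv.Perm X) z) ht2
    simpa [Subgroup.coe_mul, Equiv.Perm.mul_apply] using h
  by_cases hfpf : ∀ z, (t : Equiv.Perm X) z ≠ z
  · exact ⟨t, hfpf, htx⟩
  push_neg at hfpf
  obtain ⟨c, hc⟩ := hfpf
  -- t is an involution in the stabilizer of c, so 2 divides n - 1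
  have htc : t ∈ MulAction.stabilizer G c := by
    simp [MulAction.mem_stabilizer_iff, Subgroup.smul_def, Equiv.Perm.smul_def, hc]
  have hot : orderOf (⟨t, htc⟩ : MulAction.stabilizer G c) = 2 := by
    refine orderOf_eq_prime ?_ ?_
    · apply Subtype.ext
      simp only [SubmonoidClass.coe_pow, OneMemClass.coe_one, pow_two]
      exact ht2
    · intro h
      exact ht1 (by simpa using congrArg Subtype.val h)
  have hdvd : (2 : ℕ) ∣ Fintype.card X - 1 := by
    rw [← stab_smul_card hcard hs c, ← hot]
    exact orderOf_dvd_natCard _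
  -- Cauchy in the stabilizer of x
  have hdvd' : (2 : ℕ) ∣ Nat.card (MulAction.stabilizer G x) := by
    rw [stab_smul_card hcard hs x]; exact hdvd
  haveI : Fact (Nat.Prime 2) := ⟨Nat.prime_two⟩
  obtain ⟨u, hu⟩ := exists_prime_orderOf_dvd_card' (G := MulAction.stabilizer G x) 2 hdvd'
  set v : G := (u : G) with hv
  have hvx : (v : Equiv.Perm X) x = x := by
    have h := MulAction.mem_stabilizer_iff.mp u.2
    rw [Subgroup.smul_def, Equiv.Perm.smul_def] at h
    rw [hv]
    exact h
  have hv1 : v ≠ 1 := by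
    intro h
    have hu1 : u = 1 := Subtype.ext h
    rw [hu1] at hu
    simp at hu
  have hv2 : v * v = 1 := by
    have h2 : u ^ 2 = 1 := by rw [← hu]; exact pow_orderOf_eq_one u
    have h3 := congrArg Subtype.val h2
    simp only [SubmonoidClass.coe_pow, OneMemClass.coe_one, pow_two] at h3
    rw [hv]
    exact h3
  have vinv : ∀ z, (v : Equiv.Perm X) ((v : Equiv.Perm X) z) = z := by
    intro z
    have h := congrArg (fun p : G => (p : Equiv.Perm X) z) hv2
    simpa [Subgroup.coe_mul, Equiv.Perm.mul_apply] using h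
  have htv : t ≠ v := by
    intro h
    rw [← h] at hvx
    exact hxy (hvx.symm.trans htx)
  refine ⟨t * v, ?_, ?_⟩
  · intro z hz
    have hz' : (t : Equiv.Perm X) ((v : Equiv.Perm X) z) = z := by
      have : (↑(t * v) : Equiv.Perm X) z = z := hz
      simpa [Subgroup.coe_mul, Equiv.Perm.mul_apply] using this
    set w := (v : Equiv.Perm X) z with hw
    have htw : (t : Equiv.Perm X) w = z := hz'
    have htz : (t : Equiv.Perm X) z = w :=
      ((congrArg (t : Equiv.Perm X) htw).symm.trans (tinv w))
    have hvw : (v : Equiv.Perm X) w = z := by rw [hw]; exact vinv z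
    by_cases hwz : w = z
    · have hv0 : (v : Equiv.Perm X) z = z := hw.symm.trans hwz
      have hzx : z = x := fix_eq hs hv1 hv0 hvx
      subst hzx
      exact hxy ((htz.trans hwz).symm.trans htx)
    · obtain ⟨g, -, hg⟩ := hs z w w z (Ne.symm hwz) hwz
      have e1 : t = g := hg t ⟨htz, htw⟩
      have e2 : v = g := hg v ⟨hw.symm, hvw⟩
      exact htv (e1.trans e2.symm)
  · show (↑(t * v) : Equiv.Perm X) x = y
    simp [Subgroup.coe_mul, Equiv.Perm.mul_apply, hvx, htx]

theorem fpf_unique (hcard : 2 ≤ Fintype.card X) (hs : Sharp G) {g h : G}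
    (hg : ∀ z, (g : Equiv.Perm X) z ≠ z) (hh : ∀ z, (h : Equiv.Perm X) z ≠ z)
    {x : X} (hgh : (g : Equiv.Perm X) x = (h : Equiv.Perm X) x) : g = h := by
  classical
  set f : {g : G // ∀ z, (g : Equiv.Perm X) z ≠ z} → {y : X // y ≠ x} :=
    fun gp => ⟨(gp.1 : Equiv.Perm X) x, gp.2 x⟩ with hf
  have hsurj : Function.Surjective f := by
    rintro ⟨y, hy⟩
    obtain ⟨u, hu1, hu2⟩ := exists_fpf hcard hs (Ne.symm hy)
    exact ⟨⟨u, hu1⟩, Subtype.ext hu2⟩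
  have hcards : Nat.card {g : G // ∀ z, (g : Equiv.Perm X) z ≠ z}
      = Nat.card {y : X // y ≠ x} := by
    rw [card_fpf hcard hs, Nat.card_eq_fintype_card, Fintype.card_subtype_compl,
      Fintype.card_subtype_eq]
  have hbij : Function.Bijective f :=
    (Nat.bijective_iff_surjective_and_card f).mpr ⟨hsurj, hcards⟩
  have := hbij.injective (a₁ := ⟨g, hg⟩) (a₂ := ⟨h, hh⟩) (Subtype.ext hgh)
  simpa using congrArg Subtype.val this

theorem main (hcard : 2 ≤ Fintype.card X) (hs : Sharp G) :
    IsPrimePow (Fintype.card X) := by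
  classical
  have hne : Nonempty X := Fintype.card_pos_iff.mp (by omega)
  obtain ⟨a⟩ := hne
  -- the subgroup of "translations"
  set T : Subgroup G :=
    { carrier := {g : G | g = 1 ∨ ∀ z, (g : Equiv.Perm X) z ≠ z}
      one_mem' := Or.inl rfl
      inv_mem' := by
        rintro g (rfl | hg)
        · exact Or.inl (by simp)
        · refine Or.inr fun z hz => hg z ?_
          have h2 := congrArg (g : Equiv.Perm X) hz
          simp only [Subgroup.coe_inv] at h2
          rw [Equiv.Perm.inv_def, Equiv.apply_symm_apply] at h2
          exact h2.symm
      mul_mem' := by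
        rintro g h hg hh
        rcases hg with rfl | hg
        · simpa using hh
        rcases hh with rfl | hh
        · simpa using Or.inr hg
        by_cases h1 : g * h = 1
        · exact Or.inl h1
        refine Or.inr fun z hz => ?_
        have hz' : (h : Equiv.Perm X) z = ((g⁻¹ : G) : Equiv.Perm X) z := by
          have : (g : Equiv.Perm X) ((h : Equiv.Perm X) z) = z := by
            simpa [Subgroup.coe_mul, Equiv.Perm.mul_apply] using hz
          calc (h : Equiv.Perm X) z
              = ((g⁻¹ : G) : Equiv.Perm X) ((g : Equiv.Perm X) ((h : Equiv.Perm X) z)) := by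
                simp [Subgroup.coe_inv]
            _ = ((g⁻¹ : G) : Equiv.Perm X) z := by rw [this]
        have hginv : ∀ w, ((g⁻¹ : G) : Equiv.Perm X) w ≠ w := by
          intro w hw
          apply hg w
          have h2 := congrArg (g : Equiv.Perm X) hw
          simp only [Subgroup.coe_inv] at h2
          rw [Equiv.Perm.inv_def, Equiv.apply_symm_apply] at h2
          exact h2.symm
        have := fpf_unique hcard hs hh hginv hz'
        exact h1 (by rw [this]; simp)
      } with hT
  have hmemT : ∀ g : G, g ∈ T ↔ (g = 1 ∨ ∀ z, (g : Equiv.Perm X) z ≠ z) :=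
    fun g => Iff.rfl
  -- cardinality of T
  have hcT : Nat.card T = Fintype.card X := by
    have hdisj : Disjoint (fun g : G => g = 1)
        (fun g : G => ∀ z, (g : Equiv.Perm X) z ≠ z) := by
      rintro p hp hq g hg
      have h1 := hp g hg
      have h2 := hq g hg a
      rw [h1] at h2
      simp at h2
    have h1 := Fintype.card_subtype_or_disjoint _ _ hdisj
    have h2 : Fintype.card {g : G // g = 1} = 1 := Fintype.card_subtype_eq 1
    have h3 : Nat.card {g : G // ∀ z, (g : Equiv.Perm X) z ≠ z}
        = Fintype.card X - 1 := card_fpf hcard hs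
    have h4 : Nat.card T
        = Nat.card {g : G // g = 1 ∨ ∀ z, (g : Equiv.Perm X) z ≠ z} :=
      Nat.card_congr (Equiv.subtypeEquivRight fun g => hmemT g)
    rw [h4]
    simp only [Nat.card_eq_fintype_card] at h3 ⊢
    omega
  -- any two nontrivial fpf elements are conjugate, hence have the same order
  have horder : ∀ g h : G, (∀ z, (g : Equiv.Perm X) z ≠ z) →
      (∀ z, (h : Equiv.Perm X) z ≠ z) → orderOf g = orderOf h := by
    intro g h hg hh
    obtain ⟨u, ⟨hu1, hu2⟩, -⟩ := hs a ((g : Equiv.Perm X) a) a ((h : Equiv.Perm X) a)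
      (Ne.symm (hg a)) (Ne.symm (hh a))
    have hua : ((u⁻¹ : G) : Equiv.Perm X) a = a := by
      have h2 := congrArg ((u⁻¹ : G) : Equiv.Perm X) hu1
      simp only [Subgroup.coe_inv] at h2 ⊢
      rw [Equiv.Perm.inv_def, Equiv.symm_apply_apply] at h2
      exact h2.symm
    set w : G := u * g * u⁻¹ with hw
    have hwfpf : ∀ z, (w : Equiv.Perm X) z ≠ z := by
      intro z hz
      have hz' : (u : Equiv.Perm X) ((g : Equiv.Perm X) (((u⁻¹ : G) : Equiv.Perm X) z)) = z := by
        simpa [hw, Subgroup.coe_mul, Equiv.Perm.mul_apply] using hz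
      apply hg (((u⁻¹ : G) : Equiv.Perm X) z)
      have h2 := congrArg ((u⁻¹ : G) : Equiv.Perm X) hz'
      simp only [Subgroup.coe_inv] at h2 ⊢
      rw [Equiv.Perm.inv_def, Equiv.symm_apply_apply] at h2
      exact h2
    have hw_a : (w : Equiv.Perm X) a = (h : Equiv.Perm X) a := by
      show (↑(u * g * u⁻¹) : Equiv.Perm X) a = (h : Equiv.Perm X) a
      simp only [Subgroup.coe_mul, Equiv.Perm.mul_apply]
      rw [hua, hu2]
    have hwh : w = h := fpf_unique hcard hs hwfpf hh hw_a
    have : orderOf w = orderOf g := by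
      rw [hw]
      have := orderOf_injective (MulAut.conj u).toMonoidHom
        (MulEquiv.injective _) g
      simpa [MulAut.conj_apply] using this
    rw [← hwh, this]
  -- choose a prime and an element of that order
  set p := (Fintype.card X).minFac with hp'
  have hp : p.Prime := Nat.minFac_prime (by omega)
  haveI : Fact p.Prime := ⟨hp⟩
  have hpdvd : p ∣ Nat.card T := by rw [hcT]; exact Nat.minFac_dvd _
  obtain ⟨u, hu⟩ := exists_prime_orderOf_dvd_card' (G := T) p hpdvd
  have huG : orderOf ((u : G)) = p := by
    rw [← hu]
    exact orderOf_injective T.subtype T.subtype_injective u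
  have huG1 : (u : G) ≠ 1 := by
    intro h
    rw [h] at huG
    simp only [orderOf_one] at huG
    exact hp.one_lt.ne huG
  have hufpf : ∀ z, ((u : G) : Equiv.Perm X) z ≠ z := by
    rcases (hmemT _).mp u.2 with h | h
    · exact absurd h huG1
    · exact h
  -- T is a p-group
  have hpg : IsPGroup p T := by
    intro t
    refine ⟨1, ?_⟩
    rw [pow_one]
    by_cases ht : (t : G) = 1
    · have : t = 1 := Subtype.ext ht
      rw [this]; simp
    · have htfpf : ∀ z, ((t : G) : Equiv.Perm X) z ≠ z := by
        rcases (hmemT _).mp t.2 with h | h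
        · exact absurd h ht
        · exact h
      have hot : orderOf (t : G) = p := (horder _ _ htfpf hufpf).trans huG
      have : (t : G) ^ p = 1 := by rw [← hot]; exact pow_orderOf_eq_one _
      apply Subtype.ext
      simpa [SubmonoidClass.coe_pow] using this
  obtain ⟨k, hk⟩ := (IsPGroup.iff_card (p := p) (G := T)).mp hpg
  rw [hcT] at hk
  refine ⟨p, k, hp.prime, ?_, hk.symm⟩
  by_contra hk0
  push_neg at hk0
  interval_cases k
  simp at hk
  omega

end Burnside15

/-- Burnside: If a group `G` of permutations of a finite set `X`
with at least 2 elements acts sharply 2-transitively on `X`, then the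
cardinality of `X` is a prime power. -/
theorem sharply_two_transitive_card_prime_pow
    {X : Type*} [Fintype X] (hcard : 2 ≤ Fintype.card X)
    (G : Subgroup (Equiv.Perm X))
    (hsharp : ∀ a b c d : X, a ≠ b → c ≠ d →
      ∃! g : G, (g : Equiv.Perm X) a = c ∧ (g : Equiv.Perm X) b = d) :
    IsPrimePow (Fintype.card X) := by
  exact Burnside15.main hcard hsharp
end
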